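/- If x1, x2 ∈ X satisfy x1 ⪰ x2, then for every x3 ∈ X one has x1 ⊛ x3 ⪰ x2 ⊛ x3 and x1 ⊠ x3 ⪰ x2 ⊠ x3. -/

import Mathlib

open MeasureTheory Real Filter Topology Polynomial

noncomputable section

/-- The space of finite signed Borel measures on the extended reals `ℝ̄`. -/
abbrev SM := MeasureTheory.SignedMeasure EReal

namespace SCLDPC

/-- The weight `e^{-α/2}` as an extended nonnegative real (`+∞` at `α = -∞`). -/
def wt (α : EReal) : ENNReal :=
  if α = ⊥ then ⊤ else if α = ⊤ then 0 else ENNReal.ofReal (Real.exp (-(α.toReal) / 2))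

/-- A (nonnegative) Borel measure `μ` on `ℝ̄` is symmetric if
`∫_{-E} e^{-α/2} μ(dα) = ∫_{E} e^{-α/2} μ(dα)` for every Borel set `E`
(stated with extended nonnegative integrals, which is equivalent to requiring
equality whenever one of the two sides is finite). -/
def IsSymmMeasure (μ : Measure EReal) : Prop :=
  ∀ E : Set EReal, MeasurableSet E →
    ∫⁻ α in (fun a : EReal => -a) ⁻¹' E, wt α ∂μ = ∫⁻ α in E, wt α ∂μ

/-- Positive part of the Jordan decomposition. -/
def jp (x : SM) : Measure EReal := x.toJordanDecomposition.posPart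

/-- Negative part of the Jordan decomposition. -/
def jn (x : SM) : Measure EReal := x.toJordanDecomposition.negPart

instance (x : SM) : IsFiniteMeasure (jp x) := x.toJordanDecomposition.posPart_finite

instance (x : SM) : IsFiniteMeasure (jn x) := x.toJordanDecomposition.negPart_finite

/-- A finite signed Borel measure on `ℝ̄` is symmetric iff both parts of its Jordan
decomposition are symmetric measures. -/
def IsSymm (x : SM) : Prop := IsSymmMeasure (jp x) ∧ IsSymmMeasure (jn x)

/-- Membership in `X`, the set of symmetric probability measures on `ℝ̄`. -/
def MemX (x : SM) : Prop :=
  (∃ (μ : Measure EReal) (hμ : IsProbabilityMeasure μ),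
      x = (letI := hμ; μ.toSignedMeasure)) ∧ IsSymm x

/-- Membership in `X_d`, the set of differences of symmetric probability measures. -/
def MemXd (y : SM) : Prop := ∃ x1 x2 : SM, MemX x1 ∧ MemX x2 ∧ y = x1 - x2

/-- Integral of a real function against a finite signed measure. -/
def sInt (f : EReal → ℝ) (x : SM) : ℝ := (∫ α, f α ∂(jp x)) - ∫ α, f α ∂(jn x)

/-- `tanh(α/2)` extended continuously to `ℝ̄`. -/
def tanhHalf (α : EReal) : ℝ :=
  if α = ⊤ then 1 else if α = ⊥ then -1 else Real.tanh (α.toReal / 2)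

/-- The inverse hyperbolic tangent on `(-1, 1)`. -/
def artanh (t : ℝ) : ℝ := Real.log ((1 + t) / (1 - t)) / 2

/-- `2 tanh⁻¹(t)` valued in `ℝ̄` (sending `t ≥ 1` to `+∞` and `t ≤ -1` to `-∞`). -/
def atanhTwo (t : ℝ) : EReal :=
  if 1 ≤ t then ⊤ else if t ≤ -1 then ⊥ else ((2 * artanh t : ℝ) : EReal)

/-- Variable-node convolution `⊛` of two (nonnegative) measures:
`(μ ⊛ ν)(E) = ∫ μ(E - α) ν(dα)`, i.e. the pushforward of `μ × ν` under addition. -/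
def mConv (μ ν : Measure EReal) : Measure EReal :=
  (μ.prod ν).map fun p => p.1 + p.2

/-- Check-node convolution `⊠` of two (nonnegative) measures:
`(μ ⊠ ν)(E) = ∫ μ(2 tanh⁻¹(tanh(E/2) / tanh(α/2))) ν(dα)`, where the argument of `μ`
is the image of `E` under `β ↦ 2 tanh⁻¹(tanh(β/2) / tanh(α/2))`; equivalently, the
pushforward of `μ × ν` under `(β, α) ↦ 2 tanh⁻¹(tanh(β/2) · tanh(α/2))`. -/
def mCheck (μ ν : Measure EReal) : Measure EReal :=
  (μ.prod ν).map fun p => atanhTwo (tanhHalf p.1 * tanhHalf p.2)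

instance (μ ν : Measure EReal) [IsFiniteMeasure μ] [IsFiniteMeasure ν] :
    IsFiniteMeasure (mConv μ ν) := by unfold mConv; infer_instance

instance (μ ν : Measure EReal) [IsFiniteMeasure μ] [IsFiniteMeasure ν] :
    IsFiniteMeasure (mCheck μ ν) := by unfold mCheck; infer_instance

/-- The variable-node operation `⊛` extended bilinearly to finite signed measures. -/
def sConv (x y : SM) : SM :=
  (mConv (jp x) (jp y)).toSignedMeasure - (mConv (jp x) (jn y)).toSignedMeasure
    - (mConv (jn x) (jp y)).toSignedMeasure + (mConv (jn x) (jn y)).toSignedMeasure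

/-- The check-node operation `⊠` extended bilinearly to finite signed measures. -/
def sCheck (x y : SM) : SM :=
  (mCheck (jp x) (jp y)).toSignedMeasure - (mCheck (jp x) (jn y)).toSignedMeasure
    - (mCheck (jn x) (jp y)).toSignedMeasure + (mCheck (jn x) (jn y)).toSignedMeasure

/-- `I_f(x) = ∫ f(|tanh(α/2)|) x(dα)`. -/
def If (f : ℝ → ℝ) (x : SM) : ℝ := sInt (fun α => f |tanhHalf α|) x

/-- `x1` is degraded with respect to `x2` (written `x1 ⪰ x2`): `I_f(x1) ≥ I_f(x2)` for
every concave non-increasing `f : [0,1] → ℝ`. -/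
def Degraded (x1 x2 : SM) : Prop :=
  ∀ f : ℝ → ℝ, ConcaveOn ℝ (Set.Icc (0 : ℝ) 1) f → AntitoneOn f (Set.Icc (0 : ℝ) 1) →
    If f x2 ≤ If f x1

/-- `x1` is strictly degraded with respect to `x2` (written `x1 ≻ x2`). -/
def StrictlyDegraded (x1 x2 : SM) : Prop :=
  Degraded x1 x2 ∧ ∃ f : ℝ → ℝ, ConcaveOn ℝ (Set.Icc (0 : ℝ) 1) f ∧
    AntitoneOn f (Set.Icc (0 : ℝ) 1) ∧ If f x2 < If f x1

/-!
Write `x₁, x₂, x₃` as symmetric probability measures `μ₁, μ₂, ν` and test against a concave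
non-increasing `f`. For the check node, `|tanh(γ/2)|` of the output is the product of those of the
inputs, so `I_f(μᵢ ⊠ ν) = ∫∫ f(|tanh(β/2)| |tanh(α/2)|) dμᵢ(β) dν(α)`. For the variable node, the
symmetry of both measures lets one replace `f(|tanh((β + α)/2)|)` by its average over the sign
changes `±β ± α` with weights `(1 ± tanh(·/2))/2`; by the addition formula for `tanh` this average
is `K_f(|tanh(α/2)|, |tanh(β/2)|)` for the explicit kernel `varNodeKernel`. In both cases the
integrand is, for fixed `α`, a concave non-increasing function of `|tanh(β/2)|` (for `K_f` because
each of its two terms is a perspective of `f`), so `μ₁ ⪰ μ₂` applies to the inner integral.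
-/

open Set
open scoped ENNReal NNReal

theorem _root_.ConcaveOn.perspective_comp {E : Type*} [AddCommGroup E] [Module ℝ E] {D : Set E}
    {f : ℝ → ℝ} (hf : ConcaveOn ℝ (Icc 0 1) f) (hf' : AntitoneOn f (Icc 0 1))
    (a : E →ᵃ[ℝ] ℝ) {w : E → ℝ} (hw : ConvexOn ℝ D w) (ha : ∀ x ∈ D, 0 < a x)
    (hw₀ : ∀ x ∈ D, 0 ≤ w x) (hwa : ∀ x ∈ D, w x ≤ a x) :
    ConcaveOn ℝ D (fun x => a x * f (w x / a x)) := by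
  have hmem : ∀ x ∈ D, w x / a x ∈ Icc (0 : ℝ) 1 := fun x hx =>
    ⟨div_nonneg (hw₀ x hx) (ha x hx).le, div_le_one_of_le₀ (hwa x hx) (ha x hx).le⟩
  refine ⟨hw.1, fun x hx y hy p q hp hq hpq => ?_⟩
  set z := p • x + q • y
  have hz : z ∈ D := hw.1 hx hy hp hq hpq
  have hax := ha x hx
  have hay := ha y hy
  have haz : a z = p * a x + q * a y := Convex.combo_affine_apply hpq
  have haz_pos : 0 < a z := ha z hz
  -- the ratio at `z` is dominated by the `(p', q')`-combination of the ratios at `x` and `y`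
  set p' := p * a x / a z
  set q' := q * a y / a z
  have hp' : 0 ≤ p' := by positivity
  have hq' : 0 ≤ q' := by positivity
  have hpq' : p' + q' = 1 := by rw [← add_div, ← haz, div_self haz_pos.ne']
  have hle : w z / a z ≤ p' * (w x / a x) + q' * (w y / a y) := by
    calc w z / a z ≤ (p * w x + q * w y) / a z := by gcongr; exact hw.2 hx hy hp hq hpq
      _ = _ := by simp only [p', q']; field_simp
  have hcomb : p' • (w x / a x) + q' • (w y / a y) ∈ Icc (0 : ℝ) 1 :=
    (convex_Icc 0 1) (hmem x hx) (hmem y hy) hp' hq' hpq'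
  calc p • (a x * f (w x / a x)) + q • (a y * f (w y / a y))
      = a z * (p' • f (w x / a x) + q' • f (w y / a y)) := by
        simp only [smul_eq_mul, p', q']; field_simp
    _ ≤ a z * f (p' • (w x / a x) + q' • (w y / a y)) :=
        mul_le_mul_of_nonneg_left (hf.2 (hmem x hx) (hmem y hy) hp' hq' hpq') haz_pos.le
    _ ≤ a z * f (w z / a z) :=
        mul_le_mul_of_nonneg_left (hf' (hmem z hz) hcomb hle) haz_pos.le

theorem _root_.ConcaveOn.antitoneOn_of_even {g : ℝ → ℝ} {c : ℝ}
    (hg : ConcaveOn ℝ (Icc (-c) c) g) (heven : ∀ t, g (-t) = g t) : AntitoneOn g (Icc 0 c) := by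
  intro x hx y hy hxy
  rcases hy.1.eq_or_lt with rfl | hy0
  · rw [le_antisymm hxy hx.1]
  -- `x` is a convex combination of `-y` and `y`
  set p := (y - x) / (2 * y)
  set q := (y + x) / (2 * y)
  have hp : 0 ≤ p := div_nonneg (by linarith) (by linarith)
  have hq : 0 ≤ q := div_nonneg (by linarith [hx.1]) (by linarith)
  have hpq : p + q = 1 := by simp only [p, q]; field_simp; ring
  have hx_eq : p • -y + q • y = x := by simp only [p, q, smul_eq_mul]; field_simp; ring
  have h := hg.2 (x := -y) (y := y) ⟨by linarith [hy.2], by linarith [hy.2]⟩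
    ⟨by linarith [hy.2], hy.2⟩ hp hq hpq
  rwa [hx_eq, heven, smul_eq_mul, smul_eq_mul, ← add_mul, hpq, one_mul] at h

lemma concaveOn_comp_mul_right {φ : ℝ → ℝ} (hφ : ConcaveOn ℝ (Icc 0 1) φ) {s : ℝ}
    (hs : s ∈ Icc (0 : ℝ) 1) : ConcaveOn ℝ (Icc 0 1) (fun u => φ (u * s)) :=
  (hφ.comp_linearMap (LinearMap.mulRight ℝ s)).subset
    (fun _ hu => ⟨mul_nonneg hu.1 hs.1, mul_le_one₀ hu.2 hs.1 hs.2⟩) (convex_Icc 0 1)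

lemma antitoneOn_comp_mul_right {φ : ℝ → ℝ} (hφ : AntitoneOn φ (Icc 0 1)) {s : ℝ}
    (hs : s ∈ Icc (0 : ℝ) 1) : AntitoneOn (fun u => φ (u * s)) (Icc 0 1) :=
  fun _ hu _ hv huv => hφ ⟨mul_nonneg hu.1 hs.1, mul_le_one₀ hu.2 hs.1 hs.2⟩
    ⟨mul_nonneg hv.1 hs.1, mul_le_one₀ hv.2 hs.1 hs.2⟩ (mul_le_mul_of_nonneg_right huv hs.1)

lemma exists_measurable_bounded_eqOn {f : ℝ → ℝ} (hf : AntitoneOn f (Icc 0 1)) :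
    ∃ φ : ℝ → ℝ, Measurable φ ∧ (∃ B, ∀ r, |φ r| ≤ B) ∧ EqOn f φ (Icc 0 1) := by
  set φ : ℝ → ℝ := fun r => f (projIcc 0 1 zero_le_one r)
  have hφ : Antitone φ := fun a b hab =>
    hf (projIcc 0 1 _ a).2 (projIcc 0 1 _ b).2 (monotone_projIcc _ hab)
  have hφ_mem : ∀ r, φ r ∈ Icc (f 1) (f 0) := fun r =>
    ⟨hf (projIcc 0 1 _ r).2 ⟨zero_le_one, le_rfl⟩ (projIcc 0 1 _ r).2.2,
      hf ⟨le_rfl, zero_le_one⟩ (projIcc 0 1 _ r).2 (projIcc 0 1 _ r).2.1⟩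
  refine ⟨φ, hφ.measurable, ⟨|f 0| + |f 1|, fun r => abs_le.2 ⟨?_, ?_⟩⟩,
    fun r hr => by simp [φ, projIcc_of_mem _ hr]⟩
  · linarith [(hφ_mem r).1, neg_abs_le (f 1), abs_nonneg (f 0)]
  · linarith [(hφ_mem r).2, le_abs_self (f 0), abs_nonneg (f 1)]

lemma abs_mul_le_of_mem_Icc {w y B : ℝ} (hw : w ∈ Icc 0 1) (hy : |y| ≤ B) : |w * y| ≤ B := by
  rw [abs_mul, abs_of_nonneg hw.1]
  exact (mul_le_of_le_one_left (abs_nonneg y) hw.2).trans hy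

lemma integrable_of_abs_le {X : Type*} [MeasurableSpace X] {μ : Measure X} [IsFiniteMeasure μ]
    {h : X → ℝ} (hm : Measurable h) {B : ℝ} (hB : ∀ x, |h x| ≤ B) : Integrable h μ :=
  .of_bound hm.aestronglyMeasurable B (ae_of_all _ hB)

section VarNodeKernel

variable {φ : ℝ → ℝ}

/-- With `s = tanh(α/2)` and `t = tanh(β/2)`, this is the average of `φ |tanh((±β ± α)/2)|` over
the four signs, weighted by `(1 ± t)(1 ± s)/4` (see `symmetrize_symmetrize_add`). -/
def varNodeKernel (φ : ℝ → ℝ) (s t : ℝ) : ℝ :=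
  (1 + s * t) / 2 * φ (|s + t| / (1 + s * t)) + (1 - s * t) / 2 * φ (|s - t| / (1 - s * t))

lemma varNodeKernel_neg_left (φ : ℝ → ℝ) (s t : ℝ) :
    varNodeKernel φ (-s) t = varNodeKernel φ s t := by
  rw [varNodeKernel, varNodeKernel, show -s + t = -(s - t) by ring,
    show -s - t = -(s + t) by ring, abs_neg, abs_neg]
  simp only [neg_mul, ← sub_eq_add_neg, sub_neg_eq_add]
  ring

lemma varNodeKernel_neg_right (φ : ℝ → ℝ) (s t : ℝ) :
    varNodeKernel φ s (-t) = varNodeKernel φ s t := by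
  simp only [varNodeKernel, mul_neg, ← sub_eq_add_neg, sub_neg_eq_add]
  ring

lemma varNodeKernel_abs_abs (φ : ℝ → ℝ) (s t : ℝ) :
    varNodeKernel φ |s| |t| = varNodeKernel φ s t := by
  rcases abs_choice s with hs | hs <;> rcases abs_choice t with ht | ht <;>
    simp only [hs, ht, varNodeKernel_neg_left, varNodeKernel_neg_right]

lemma varNodeKernel_one_left {t : ℝ} (ht : t ∈ Icc (-1) 1) : varNodeKernel φ 1 t = φ 1 := by
  obtain ⟨ht₁, ht₂⟩ := ht
  rcases ht₁.eq_or_lt with rfl | ht₁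
  · norm_num [varNodeKernel]
  rcases ht₂.eq_or_lt with rfl | ht₂
  · norm_num [varNodeKernel]
  have h₁ : |1 + t| = 1 + 1 * t := by rw [abs_of_pos (by linarith)]; ring
  have h₂ : |1 - t| = 1 - 1 * t := by rw [abs_of_nonneg (by linarith)]; ring
  rw [varNodeKernel, h₁, h₂, div_self (by linarith), div_self (by linarith)]
  ring

lemma concaveOn_perspective_abs_add (hφ : ConcaveOn ℝ (Icc 0 1) φ)
    (hφ' : AntitoneOn φ (Icc 0 1)) {s : ℝ} (hs : |s| < 1) :
    ConcaveOn ℝ (Icc (-1) 1) (fun t => (1 + s * t) * φ (|s + t| / (1 + s * t))) := by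
  have hst : ∀ t ∈ Icc (-1 : ℝ) 1, |s * t| < 1 := fun t ht => by
    rw [abs_mul]; exact mul_lt_one_of_nonneg_of_lt_one_left (abs_nonneg s) hs (abs_le.2 ht)
  rw [abs_lt] at hs
  have habs : ConvexOn ℝ (Icc (-1) 1) (fun t : ℝ => |s + t|) :=
    ((convexOn_univ_norm.translate_right s).subset (subset_univ _) (convex_Icc _ _)).congr
      fun t _ => Real.norm_eq_abs _
  set a : ℝ →ᵃ[ℝ] ℝ := AffineMap.const ℝ ℝ 1 + s • AffineMap.id ℝ ℝ
  have ha : ∀ t, a t = 1 + s * t := fun _ => rfl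
  refine hφ.perspective_comp hφ' a habs (fun t ht => ?_) (fun t _ => abs_nonneg _)
    fun t ⟨ht₁, ht₂⟩ => ?_
  · rw [ha]; linarith [(abs_lt.1 (hst t ht)).1]
  · rw [ha, abs_le]; constructor <;> nlinarith

lemma varNodeKernel_concaveOn (hφ : ConcaveOn ℝ (Icc 0 1) φ) (hφ' : AntitoneOn φ (Icc 0 1))
    {s : ℝ} (hs : s ∈ Icc 0 1) : ConcaveOn ℝ (Icc (-1) 1) (varNodeKernel φ s) := by
  rcases hs.2.eq_or_lt with rfl | hs₁
  · exact (concaveOn_const (φ 1) (convex_Icc _ _)).congr fun t ht =>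
      (varNodeKernel_one_left ht).symm
  have hs' : |s| < 1 := abs_lt.2 ⟨by linarith [hs.1], hs₁⟩
  have hsum := ((concaveOn_perspective_abs_add hφ hφ' hs').smul (by norm_num : (0 : ℝ) ≤ 1 / 2)).add
    ((concaveOn_perspective_abs_add hφ hφ' (s := -s) (by rwa [abs_neg])).smul
      (by norm_num : (0 : ℝ) ≤ 1 / 2))
  refine hsum.congr fun t _ => ?_
  simp only [varNodeKernel, Pi.add_apply, smul_eq_mul, neg_mul, ← sub_eq_add_neg,
    neg_add_eq_sub, abs_sub_comm t s]
  ring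

lemma varNodeKernel_antitoneOn (hφ : ConcaveOn ℝ (Icc 0 1) φ) (hφ' : AntitoneOn φ (Icc 0 1))
    {s : ℝ} (hs : s ∈ Icc 0 1) : AntitoneOn (varNodeKernel φ s) (Icc 0 1) :=
  (varNodeKernel_concaveOn hφ hφ' hs).antitoneOn_of_even (varNodeKernel_neg_right φ s)

lemma abs_varNodeKernel_le {B : ℝ} (hφB : ∀ r, |φ r| ≤ B) {s t : ℝ} (hs : |s| ≤ 1)
    (ht : |t| ≤ 1) : |varNodeKernel φ s t| ≤ B := by
  have hst : -1 ≤ s * t ∧ s * t ≤ 1 := by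
    rw [← abs_le, abs_mul]; exact mul_le_one₀ hs (abs_nonneg t) ht
  have hplus : 0 ≤ (1 + s * t) / 2 := by linarith
  have hminus : 0 ≤ (1 - s * t) / 2 := by linarith
  calc |varNodeKernel φ s t|
      ≤ (1 + s * t) / 2 * |φ (|s + t| / (1 + s * t))|
          + (1 - s * t) / 2 * |φ (|s - t| / (1 - s * t))| := by
        refine (abs_add_le _ _).trans_eq ?_
        rw [abs_mul, abs_mul, abs_of_nonneg hplus, abs_of_nonneg hminus]
    _ ≤ (1 + s * t) / 2 * B + (1 - s * t) / 2 * B :=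
        add_le_add (mul_le_mul_of_nonneg_left (hφB _) hplus)
          (mul_le_mul_of_nonneg_left (hφB _) hminus)
    _ = B := by ring

lemma measurable_varNodeKernel (hφ : Measurable φ) :
    Measurable (Function.uncurry (varNodeKernel φ)) := by
  unfold varNodeKernel Function.uncurry
  fun_prop

end VarNodeKernel

lemma _root_.Real.tanh_add_mul (x y : ℝ) :
    Real.tanh (x + y) * (1 + Real.tanh x * Real.tanh y) = Real.tanh x + Real.tanh y := by
  have hx := (Real.cosh_pos x).ne'
  have hy := (Real.cosh_pos y).ne'
  have hxy := (Real.cosh_pos (x + y)).ne'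
  simp only [Real.tanh_eq_sinh_div_cosh]
  field_simp
  rw [Real.sinh_add, Real.cosh_add]
  ring

@[simp] lemma tanhHalf_top : tanhHalf ⊤ = 1 := by simp [tanhHalf]

@[simp] lemma tanhHalf_bot : tanhHalf ⊥ = -1 := by simp [tanhHalf]

@[simp] lemma tanhHalf_coe (x : ℝ) : tanhHalf x = Real.tanh (x / 2) := by simp [tanhHalf]

lemma tanhHalf_mem_Icc (α : EReal) : tanhHalf α ∈ Icc (-1) 1 := by
  induction α using EReal.rec with
  | bot => simp
  | coe x => simpa using ⟨(Real.neg_one_lt_tanh _).le, (Real.tanh_lt_one _).le⟩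
  | top => simp

lemma abs_tanhHalf_le_one (α : EReal) : |tanhHalf α| ≤ 1 := abs_le.2 (tanhHalf_mem_Icc α)

lemma abs_tanhHalf_mem_Icc (α : EReal) : |tanhHalf α| ∈ Icc 0 1 :=
  ⟨abs_nonneg _, abs_tanhHalf_le_one α⟩

lemma tanhHalf_mul_tanhHalf_mem_Icc (α β : EReal) : tanhHalf α * tanhHalf β ∈ Icc (-1) 1 := by
  rw [mem_Icc, ← abs_le, abs_mul]
  exact mul_le_one₀ (abs_tanhHalf_le_one α) (abs_nonneg _) (abs_tanhHalf_le_one β)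

lemma one_add_tanhHalf_div_two_mem_Icc (α : EReal) : (1 + tanhHalf α) / 2 ∈ Icc 0 1 := by
  have := tanhHalf_mem_Icc α
  constructor <;> linarith [this.1, this.2]

lemma one_sub_tanhHalf_div_two_mem_Icc (α : EReal) : (1 - tanhHalf α) / 2 ∈ Icc 0 1 := by
  have := tanhHalf_mem_Icc α
  constructor <;> linarith [this.1, this.2]

lemma tanhHalf_neg (α : EReal) : tanhHalf (-α) = -tanhHalf α := by
  induction α using EReal.rec with
  | bot => simp
  | coe x => rw [← EReal.coe_neg, tanhHalf_coe, tanhHalf_coe, neg_div, Real.tanh_neg]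
  | top => simp

@[fun_prop]
lemma measurable_tanhHalf : Measurable tanhHalf := by
  refine EReal.measurable_of_measurable_real ?_
  simp only [tanhHalf_coe, Real.tanh_eq_sinh_div_cosh]
  fun_prop

/-- On `ℝ̄` the addition formula for `tanh` holds without exception: when `α + β` is the
ambiguous `⊤ + ⊥ = ⊥`, both sides vanish. -/
lemma tanhHalf_add_mul (α β : EReal) :
    tanhHalf (α + β) * (1 + tanhHalf α * tanhHalf β) = tanhHalf α + tanhHalf β := by
  induction α using EReal.rec <;> induction β using EReal.rec <;>
    simp [← EReal.coe_add, add_div, Real.tanh_add_mul, add_comm]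

lemma tanhHalf_atanhTwo {r : ℝ} (hr : |r| ≤ 1) : tanhHalf (atanhTwo r) = r := by
  rw [abs_le] at hr
  unfold atanhTwo
  split_ifs with h₁ h₂
  · simp [le_antisymm hr.2 h₁]
  · simp [le_antisymm h₂ hr.1]
  · push Not at h₁ h₂
    rw [tanhHalf_coe, mul_div_cancel_left₀ _ two_ne_zero, artanh, ← one_div_mul_eq_div,
      ← Real.artanh_eq_half_log ⟨hr.1, hr.2⟩, Real.tanh_artanh ⟨h₂, h₁⟩]

@[fun_prop]
lemma measurable_atanhTwo : Measurable atanhTwo := by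
  unfold atanhTwo artanh
  refine Measurable.ite (measurableSet_le measurable_const measurable_id) measurable_const
    (Measurable.ite (measurableSet_le measurable_id measurable_const) measurable_const ?_)
  fun_prop

def symmetrize (h : EReal → ℝ) (α : EReal) : ℝ :=
  (1 + tanhHalf α) / 2 * h α + (1 - tanhHalf α) / 2 * h (-α)

lemma abs_symmetrize_le {h : EReal → ℝ} {B : ℝ} (hB : ∀ α, |h α| ≤ B) (α : EReal) :
    |symmetrize h α| ≤ B := by
  have hw₁ := one_add_tanhHalf_div_two_mem_Icc α
  have hw₂ := one_sub_tanhHalf_div_two_mem_Icc α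
  calc |symmetrize h α|
      ≤ (1 + tanhHalf α) / 2 * |h α| + (1 - tanhHalf α) / 2 * |h (-α)| := by
        refine (abs_add_le _ _).trans_eq ?_
        rw [abs_mul, abs_mul, abs_of_nonneg hw₁.1, abs_of_nonneg hw₂.1]
    _ ≤ (1 + tanhHalf α) / 2 * B + (1 - tanhHalf α) / 2 * B :=
        add_le_add (mul_le_mul_of_nonneg_left (hB _) hw₁.1)
          (mul_le_mul_of_nonneg_left (hB _) hw₂.1)
    _ = B := by ring

lemma one_add_mul_one_add_mul_comp_tanhHalf_add (φ : ℝ → ℝ) (α β : EReal) :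
    (1 + tanhHalf α) * (1 + tanhHalf β) * φ |tanhHalf (α + β)|
      = (1 + tanhHalf α) * (1 + tanhHalf β)
        * φ (|tanhHalf α + tanhHalf β| / (1 + tanhHalf α * tanhHalf β)) := by
  have hmem := tanhHalf_mul_tanhHalf_mem_Icc α β
  rcases (show 0 ≤ 1 + tanhHalf α * tanhHalf β by linarith [hmem.1]).eq_or_lt with h | h
  · -- `tanhHalf α * tanhHalf β = -1` forces `tanhHalf α = -tanhHalf β = ±1`
    have hα := abs_le.1 (abs_tanhHalf_le_one α)
    have hβ := abs_le.1 (abs_tanhHalf_le_one β)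
    have : (1 + tanhHalf α) * (1 + tanhHalf β) = 0 := by
      nlinarith [sq_nonneg (tanhHalf α + tanhHalf β)]
    rw [this, zero_mul, zero_mul]
  · rw [eq_div_of_mul_eq h.ne' (tanhHalf_add_mul α β), abs_div, abs_of_pos h]

lemma symmetrize_symmetrize_add (φ : ℝ → ℝ) (α β : EReal) :
    symmetrize (fun β' => symmetrize (fun α' => φ |tanhHalf (β' + α')|) α) β
      = varNodeKernel φ |tanhHalf α| |tanhHalf β| := by
  have h₁ := one_add_mul_one_add_mul_comp_tanhHalf_add φ β α
  have h₂ := one_add_mul_one_add_mul_comp_tanhHalf_add φ β (-α)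
  have h₃ := one_add_mul_one_add_mul_comp_tanhHalf_add φ (-β) α
  have h₄ := one_add_mul_one_add_mul_comp_tanhHalf_add φ (-β) (-α)
  simp only [tanhHalf_neg, mul_neg, neg_mul, neg_neg, ← sub_eq_add_neg] at h₁ h₂ h₃ h₄
  rw [varNodeKernel_abs_abs]
  simp only [symmetrize, varNodeKernel, ← sub_eq_add_neg]
  set s := tanhHalf α
  set t := tanhHalf β
  rw [mul_comm t s, add_comm t s] at h₁
  rw [mul_comm t s, abs_sub_comm] at h₂
  rw [mul_comm t s, neg_add_eq_sub] at h₃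
  rw [mul_comm t s, neg_sub_left, abs_neg] at h₄
  linear_combination (h₁ + h₂ + h₃ + h₄) / 4

lemma measurable_wt : Measurable wt := by
  unfold wt
  refine Measurable.ite (measurableSet_singleton _) measurable_const
    (Measurable.ite (measurableSet_singleton _) measurable_const ?_)
  fun_prop

lemma ofReal_one_sub_tanhHalf_div_two {α : EReal} (hα : α ≠ ⊥) :
    ENNReal.ofReal ((1 - tanhHalf α) / 2)
      = ENNReal.ofReal (1 / (2 * Real.cosh (α.toReal / 2))) * wt α := by
  induction α using EReal.rec with
  | bot => exact absurd rfl hα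
  | top => simp [wt]
  | coe x =>
    have hcosh := Real.cosh_pos (x / 2)
    rw [wt, if_neg hα, if_neg (EReal.coe_ne_top x), ← ENNReal.ofReal_mul (by positivity),
      tanhHalf_coe, EReal.toReal_coe, Real.tanh_eq_sinh_div_cosh, neg_div, ← Real.cosh_sub_sinh]
    congr 1
    field_simp

namespace IsSymmMeasure

variable {μ : Measure EReal}

lemma measure_bot_eq_zero (hμ : IsSymmMeasure μ) : μ {⊥} = 0 := by
  have h := hμ {⊥} (measurableSet_singleton _)
  rw [show (fun a : EReal => -a) ⁻¹' {⊥} = {⊤} by ext; simp,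
    Measure.restrict_singleton, Measure.restrict_singleton] at h
  simpa [wt] using h

lemma ae_ne_bot (hμ : IsSymmMeasure μ) : ∀ᵐ α ∂μ, α ≠ ⊥ :=
  measure_eq_zero_iff_ae_notMem.1 hμ.measure_bot_eq_zero

lemma lintegral_comp_neg_mul_wt (hμ : IsSymmMeasure μ) {g : EReal → ℝ≥0∞} (hg : Measurable g) :
    ∫⁻ α, g (-α) * wt α ∂μ = ∫⁻ α, g α * wt α ∂μ := by
  have hinv : (μ.withDensity wt).map (fun a => -a) = μ.withDensity wt := by
    ext E hE
    rw [Measure.map_apply measurable_neg hE, withDensity_apply _ (measurable_neg hE),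
      withDensity_apply _ hE, hμ E hE]
  have hwd : ∀ g : EReal → ℝ≥0∞, Measurable g →
      ∫⁻ α, g α * wt α ∂μ = ∫⁻ α, g α ∂(μ.withDensity wt) := fun g hg => by
    rw [lintegral_withDensity_eq_lintegral_mul _ measurable_wt hg]
    simp only [Pi.mul_apply, mul_comm]
  rw [hwd _ hg, hwd (fun α => g (-α)) (hg.comp measurable_neg),
    ← lintegral_map hg measurable_neg, hinv]

/-- The density `(1 - tanh(α/2))/2 = e^{-α/2} / (2 cosh(α/2))` is `wt` times an even function,
so the symmetry of `μ` makes the resulting finite measure invariant under `α ↦ -α`. -/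
lemma map_neg_withDensity_one_sub_tanhHalf (hμ : IsSymmMeasure μ) :
    (μ.withDensity fun α => ENNReal.ofReal ((1 - tanhHalf α) / 2)).map (fun a => -a)
      = μ.withDensity fun α => ENNReal.ofReal ((1 - tanhHalf α) / 2) := by
  set c : EReal → ℝ≥0∞ := fun α => ENNReal.ofReal (1 / (2 * Real.cosh (α.toReal / 2)))
  have hc : Measurable c := by fun_prop
  have hsplit : ∀ S, MeasurableSet S → ∫⁻ α in S, ENNReal.ofReal ((1 - tanhHalf α) / 2) ∂μ
      = ∫⁻ α, S.indicator c α * wt α ∂μ := by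
    intro S hS
    rw [← lintegral_indicator hS]
    refine lintegral_congr_ae (hμ.ae_ne_bot.mono fun α hα => ?_)
    by_cases hαS : α ∈ S
    · simp [hαS, c, ofReal_one_sub_tanhHalf_div_two hα]
    · simp [hαS]
  ext E hE
  rw [Measure.map_apply measurable_neg hE, withDensity_apply _ (measurable_neg hE),
    withDensity_apply _ hE, hsplit _ (measurable_neg hE), hsplit _ hE,
    ← hμ.lintegral_comp_neg_mul_wt (hc.indicator hE)]
  congr with α
  by_cases hαE : -α ∈ E
  · simp [hαE, c, neg_div]
  · simp [hαE]

lemma integral_one_sub_tanhHalf_mul_comp_neg [IsFiniteMeasure μ] (hμ : IsSymmMeasure μ)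
    {h : EReal → ℝ} (hm : Measurable h) :
    ∫ α, (1 - tanhHalf α) / 2 * h (-α) ∂μ = ∫ α, (1 - tanhHalf α) / 2 * h α ∂μ := by
  have hρ : ∀ g : EReal → ℝ, ∫ α, g α ∂(μ.withDensity fun α => ENNReal.ofReal
      ((1 - tanhHalf α) / 2)) = ∫ α, (1 - tanhHalf α) / 2 * g α ∂μ := fun g => by
    rw [integral_withDensity_eq_integral_toReal_smul (by fun_prop)
      (ae_of_all _ fun _ => ENNReal.ofReal_lt_top)]
    congr with α
    rw [ENNReal.toReal_ofReal (one_sub_tanhHalf_div_two_mem_Icc α).1, smul_eq_mul]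
  rw [← hρ, ← hρ, ← integral_map measurable_neg.aemeasurable hm.aestronglyMeasurable,
    hμ.map_neg_withDensity_one_sub_tanhHalf]

theorem integral_symmetrize [IsFiniteMeasure μ] (hμ : IsSymmMeasure μ) {h : EReal → ℝ}
    (hm : Measurable h) {B : ℝ} (hB : ∀ α, |h α| ≤ B) :
    ∫ α, symmetrize h α ∂μ = ∫ α, h α ∂μ := by
  have hint : ∀ w : EReal → ℝ, Measurable w → (∀ α, w α ∈ Icc 0 1) → ∀ g : EReal → ℝ,
      Measurable g → (∀ α, |g α| ≤ B) → Integrable (fun α => w α * g α) μ :=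
    fun w hw hw₁ g hg hgB =>
      integrable_of_abs_le (hw.mul hg) fun α => abs_mul_le_of_mem_Icc (hw₁ α) (hgB α)
  have hwp : Measurable fun α => (1 + tanhHalf α) / 2 := by fun_prop
  have hwm : Measurable fun α => (1 - tanhHalf α) / 2 := by fun_prop
  unfold symmetrize
  rw [integral_add (hint _ hwp one_add_tanhHalf_div_two_mem_Icc _ hm hB)
      (hint _ hwm one_sub_tanhHalf_div_two_mem_Icc (fun α => h (-α)) (hm.comp measurable_neg)
        fun α => hB (-α)),
    hμ.integral_one_sub_tanhHalf_mul_comp_neg hm,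
    ← integral_add (hint _ hwp one_add_tanhHalf_div_two_mem_Icc _ hm hB)
      (hint _ hwm one_sub_tanhHalf_div_two_mem_Icc _ hm hB)]
  congr with α
  ring

end IsSymmMeasure

lemma _root_.MeasureTheory.Measure.toSignedMeasure_toJordanDecomposition {X : Type*}
    [MeasurableSpace X] (μ : Measure X) [IsFiniteMeasure μ] :
    μ.toSignedMeasure.toJordanDecomposition = ⟨μ, 0, .zero_right⟩ := by
  rw [← JordanDecomposition.toJordanDecomposition_toSignedMeasure ⟨μ, 0, .zero_right⟩]
  simp [JordanDecomposition.toSignedMeasure]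

@[simp] lemma jp_toSignedMeasure (μ : Measure EReal) [IsFiniteMeasure μ] :
    jp μ.toSignedMeasure = μ := by
  rw [jp, Measure.toSignedMeasure_toJordanDecomposition]

@[simp] lemma jn_toSignedMeasure (μ : Measure EReal) [IsFiniteMeasure μ] :
    jn μ.toSignedMeasure = 0 := by
  rw [jn, Measure.toSignedMeasure_toJordanDecomposition]

lemma MemX.exists_eq_toSignedMeasure {x : SM} (hx : MemX x) :
    ∃ (μ : Measure EReal) (_ : IsProbabilityMeasure μ),
      IsSymmMeasure μ ∧ x = μ.toSignedMeasure := by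
  obtain ⟨⟨μ, _, rfl⟩, hsymm, -⟩ := hx
  exact ⟨μ, inferInstance, by simpa using hsymm, rfl⟩

lemma If_toSignedMeasure (g : ℝ → ℝ) (μ : Measure EReal) [IsFiniteMeasure μ] :
    If g μ.toSignedMeasure = ∫ α, g |tanhHalf α| ∂μ := by
  simp [If, sInt]

lemma If_congr {f g : ℝ → ℝ} (hfg : EqOn f g (Icc 0 1)) (x : SM) : If f x = If g x := by
  simp only [If, sInt, hfg (abs_tanhHalf_mem_Icc _)]

lemma sConv_toSignedMeasure (μ ν : Measure EReal) [IsFiniteMeasure μ] [IsFiniteMeasure ν] :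
    sConv μ.toSignedMeasure ν.toSignedMeasure = (mConv μ ν).toSignedMeasure := by
  simp [sConv, mConv]

lemma sCheck_toSignedMeasure (μ ν : Measure EReal) [IsFiniteMeasure μ] [IsFiniteMeasure ν] :
    sCheck μ.toSignedMeasure ν.toSignedMeasure = (mCheck μ ν).toSignedMeasure := by
  simp [sCheck, mCheck]

lemma degraded_toSignedMeasure_of_bounded {μ₁ μ₂ : Measure EReal} [IsFiniteMeasure μ₁]
    [IsFiniteMeasure μ₂]
    (h : ∀ φ : ℝ → ℝ, Measurable φ → ∀ B, (∀ r, |φ r| ≤ B) → ConcaveOn ℝ (Icc 0 1) φ →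
      AntitoneOn φ (Icc 0 1) → ∫ α, φ |tanhHalf α| ∂μ₂ ≤ ∫ α, φ |tanhHalf α| ∂μ₁) :
    Degraded μ₁.toSignedMeasure μ₂.toSignedMeasure := by
  intro f hfc hfa
  obtain ⟨φ, hφ, ⟨B, hφB⟩, hfφ⟩ := exists_measurable_bounded_eqOn hfa
  simpa only [If_congr hfφ, If_toSignedMeasure] using
    h φ hφ B hφB (hfc.congr hfφ) (hfa.congr hfφ)

theorem integral_mConv_eq {μ ν : Measure EReal} [IsFiniteMeasure μ] [IsFiniteMeasure ν]
    (hμ : IsSymmMeasure μ) (hν : IsSymmMeasure ν) {φ : ℝ → ℝ} (hφ : Measurable φ) {B : ℝ}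
    (hφB : ∀ r, |φ r| ≤ B) :
    ∫ γ, φ |tanhHalf γ| ∂(mConv μ ν)
      = ∫ α, ∫ β, varNodeKernel φ |tanhHalf α| |tanhHalf β| ∂μ ∂ν := by
  set F : EReal → ℝ := fun γ => φ |tanhHalf γ|
  have hF : Measurable F := by fun_prop
  have hFB : ∀ γ, |F γ| ≤ B := fun γ => hφB _
  calc ∫ γ, F γ ∂(mConv μ ν)
      = ∫ p, F (p.1 + p.2) ∂(μ.prod ν) := integral_map (by fun_prop) hF.aestronglyMeasurable
    _ = ∫ β, ∫ α, F (β + α) ∂ν ∂μ :=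
        integral_prod _ (integrable_of_abs_le (by fun_prop) fun p => hFB _)
    _ = ∫ β, ∫ α, symmetrize (fun α => F (β + α)) α ∂ν ∂μ := by
        congr with β
        exact (hν.integral_symmetrize (by fun_prop) fun α => hFB _).symm
    _ = ∫ α, ∫ β, symmetrize (fun α => F (β + α)) α ∂μ ∂ν :=
        integral_integral_swap (integrable_of_abs_le (by unfold symmetrize; fun_prop)
          fun p => abs_symmetrize_le (fun α => hFB _) _)
    _ = ∫ α, ∫ β, symmetrize (fun β => symmetrize (fun α => F (β + α)) α) β ∂μ ∂ν := by
        congr with α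
        exact (hμ.integral_symmetrize (h := fun β => symmetrize (fun α => F (β + α)) α)
          (by unfold symmetrize; fun_prop) fun β => abs_symmetrize_le (fun α => hFB _) α).symm
    _ = _ := by simp only [F, symmetrize_symmetrize_add]

theorem integral_mCheck_eq (μ ν : Measure EReal) [IsFiniteMeasure μ] [IsFiniteMeasure ν]
    {φ : ℝ → ℝ} (hφ : Measurable φ) {B : ℝ} (hφB : ∀ r, |φ r| ≤ B) :
    ∫ γ, φ |tanhHalf γ| ∂(mCheck μ ν) = ∫ α, ∫ β, φ (|tanhHalf β| * |tanhHalf α|) ∂μ ∂ν := by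
  rw [mCheck, integral_map (by fun_prop)
    (by fun_prop : Measurable fun γ => φ |tanhHalf γ|).aestronglyMeasurable]
  simp only [tanhHalf_atanhTwo (abs_le.2 (tanhHalf_mul_tanhHalf_mem_Icc _ _)), abs_mul]
  exact integral_prod_symm _ (integrable_of_abs_le (by fun_prop) fun p => hφB _)

theorem integral_integral_le_of_degraded {μ₁ μ₂ ν : Measure EReal} [IsFiniteMeasure μ₁]
    [IsFiniteMeasure μ₂] [IsFiniteMeasure ν] (h : Degraded μ₁.toSignedMeasure μ₂.toSignedMeasure)
    {K : ℝ → ℝ → ℝ} (hKm : Measurable (Function.uncurry K)) {B : ℝ}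
    (hKB : ∀ s u, |s| ≤ 1 → |u| ≤ 1 → |K s u| ≤ B)
    (hKc : ∀ s ∈ Icc (0 : ℝ) 1, ConcaveOn ℝ (Icc 0 1) (K s))
    (hKa : ∀ s ∈ Icc (0 : ℝ) 1, AntitoneOn (K s) (Icc 0 1)) :
    ∫ α, ∫ β, K |tanhHalf α| |tanhHalf β| ∂μ₂ ∂ν
      ≤ ∫ α, ∫ β, K |tanhHalf α| |tanhHalf β| ∂μ₁ ∂ν := by
  have hKm' : Measurable fun p : EReal × EReal => K |tanhHalf p.1| |tanhHalf p.2| :=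
    hKm.comp (f := fun p : EReal × EReal => (|tanhHalf p.1|, |tanhHalf p.2|)) (by fun_prop)
  have hint : ∀ (μ : Measure EReal) [IsFiniteMeasure μ],
      Integrable (fun α => ∫ β, K |tanhHalf α| |tanhHalf β| ∂μ) ν := fun μ _ =>
    (integrable_of_abs_le (μ := ν.prod μ) hKm' fun p =>
      hKB _ _ (by simpa using abs_tanhHalf_le_one _)
        (by simpa using abs_tanhHalf_le_one _)).integral_prod_left
  refine integral_mono (hint μ₂) (hint μ₁) fun α => ?_
  have hα := abs_tanhHalf_mem_Icc α
  simpa only [If_toSignedMeasure] using h _ (hKc _ hα) (hKa _ hα)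

/-- Degradation is preserved by both operations: if `x1 ⪰ x2`, then
for every `x3 ∈ X`, `x1 ⊛ x3 ⪰ x2 ⊛ x3` and `x1 ⊠ x3 ⪰ x2 ⊠ x3`. -/
theorem degradation_preserved
    (x1 x2 : SM) (h1 : MemX x1) (h2 : MemX x2) (hdeg : Degraded x1 x2) :
    ∀ x3 : SM, MemX x3 →
      Degraded (sConv x1 x3) (sConv x2 x3) ∧ Degraded (sCheck x1 x3) (sCheck x2 x3) := by
  intro x3 h3
  obtain ⟨μ₁, _, hμ₁, rfl⟩ := h1.exists_eq_toSignedMeasure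
  obtain ⟨μ₂, _, hμ₂, rfl⟩ := h2.exists_eq_toSignedMeasure
  obtain ⟨ν, _, hν, rfl⟩ := h3.exists_eq_toSignedMeasure
  rw [sConv_toSignedMeasure, sConv_toSignedMeasure, sCheck_toSignedMeasure,
    sCheck_toSignedMeasure]
  constructor <;> refine degraded_toSignedMeasure_of_bounded fun φ hφ B hφB hφc hφa => ?_
  · rw [integral_mConv_eq hμ₁ hν hφ hφB, integral_mConv_eq hμ₂ hν hφ hφB]
    exact integral_integral_le_of_degraded hdeg (measurable_varNodeKernel hφ)
      (fun _ _ => abs_varNodeKernel_le hφB)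
      (fun s hs => (varNodeKernel_concaveOn hφc hφa hs).subset
        (Icc_subset_Icc (by norm_num) le_rfl) (convex_Icc 0 1))
      fun s hs => varNodeKernel_antitoneOn hφc hφa hs
  · rw [integral_mCheck_eq _ _ hφ hφB, integral_mCheck_eq _ _ hφ hφB]
    exact integral_integral_le_of_degraded (K := fun s u => φ (u * s)) hdeg (by fun_prop)
      (fun _ _ _ _ => hφB _) (fun s hs => concaveOn_comp_mul_right hφc hs)
      fun s hs => antitoneOn_comp_mul_right hφa hs

end SCLDPC
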